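/- Requiring a zone partition with exactly N nonempty zones can worsen the optimum as N increases: there exists an instance of the zone tariff design problem (multiple counting) such that the minimum objective over zone partitions with exactly 2 nonempty zones is 0 while the minimum over zone partitions with exactly 3 nonempty zones is 1. Concretely, on the path graph with vertices v_1, v_2, v_3 and edges {v_1,v_2}, {v_2,v_3}, with OD pairs (v_1,v_2), (v_1,v_3), (v_2,v_3), each with one passenger, reference prices 1, 2, 2 respectively, and paths equal to the unique simple paths, the partition {{v_1,v_2},{v_3}} with a suitable price function achieves objective 0, while every partition into 3 nonempty zones together with any price function P : ℕ≥1 → ℝ≥0 has objective at least 1, and objective exactly 1 is achievable. -/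

import Mathlib

open scoped Classical
noncomputable section

/-- A zone partition of the vertex set `V`: nonempty, pairwise disjoint zones covering `V`. -/
def IsZonePartition {V : Type*} (Z : Finset (Finset V)) : Prop :=
  (∀ A ∈ Z, A.Nonempty) ∧ (∀ A ∈ Z, ∀ B ∈ Z, A ≠ B → Disjoint A B) ∧
    ∀ v : V, ∃ A ∈ Z, v ∈ A

/-- `v` and `w` lie in a common zone of `Z`. -/
def SameZone {V : Type*} (Z : Finset (Finset V)) (v w : V) : Prop :=
  ∃ A ∈ Z, v ∈ A ∧ w ∈ A

/-- Multiple-counting zone function: one plus the number of zone borders crossed along `W`. -/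
def sigmaM {V : Type*} (Z : Finset (Finset V)) (W : List V) : ℕ :=
  1 + ((W.zip W.tail).filter (fun p => decide (¬ SameZone Z p.1 p.2))).length

/-- Single-counting zone function: the number of distinct zones met by `W`. -/
def sigmaS {V : Type*} (Z : Finset (Finset V)) (W : List V) : ℕ :=
  (Z.filter (fun A => ∃ v ∈ W, v ∈ A)).card

/-- A zone is connected if the induced subgraph is connected. -/
def ZoneConnected {V : Type*} (G : SimpleGraph V) (A : Finset V) : Prop :=
  (G.induce (A : Set V)).Connected

/-- Objective value of the zone tariff design problem. -/
def zoneObj {V ι : Type*} (D : Finset ι) (r : ι → ℝ) (t : ι → ℕ) (Wd : ι → List V)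
    (σ : Finset (Finset V) → List V → ℕ) (Z : Finset (Finset V)) (P : ℕ → ℝ) : ℝ :=
  ∑ d ∈ D, (t d : ℝ) * |r d - P (σ Z (Wd d))|

/-- Optimal (infimum) objective value over all feasible zone partitions and
nonnegative price functions. -/
def zStar {V ι : Type*} (D : Finset ι) (r : ι → ℝ) (t : ι → ℕ) (Wd : ι → List V)
    (σ : Finset (Finset V) → List V → ℕ) (feas : Finset (Finset V) → Prop) : ℝ :=
  sInf {x : ℝ | ∃ Z P, feas Z ∧ (∀ k, 0 ≤ P k) ∧ x = zoneObj D r t Wd σ Z P}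

/-- The path graph on three vertices v_0 - v_1 - v_2. -/
def pathGraph3 : SimpleGraph (Fin 3) :=
  SimpleGraph.fromRel (fun i j => (i : ℕ) + 1 = (j : ℕ))

/-!
With the zones `{v_0, v_1}, {v_2}` the three OD pairs cross `0, 1, 1` borders, so the prices
`P 1 = 1`, `P 2 = 2` match every reference price. A partition of three vertices into three zones
is discrete, so `(v_0, v_1)` and `(v_1, v_2)` cross one border each and pay the same price `P 2`
against reference prices `1` and `2`; by the triangle inequality the objective is at least `1`,
and `P ≡ 2` attains it.
-/

lemma zoneObj_nonneg {V ι : Type*} (D : Finset ι) (r : ι → ℝ) (t : ι → ℕ) (Wd : ι → List V)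
    (σ : Finset (Finset V) → List V → ℕ) (Z : Finset (Finset V)) (P : ℕ → ℝ) :
    0 ≤ zoneObj D r t Wd σ Z P :=
  Finset.sum_nonneg fun _ _ => mul_nonneg (Nat.cast_nonneg _) (abs_nonneg _)

lemma zStar_eq_of_attained {V ι : Type*} {D : Finset ι} {r : ι → ℝ} {t : ι → ℕ}
    {Wd : ι → List V} {σ : Finset (Finset V) → List V → ℕ} {feas : Finset (Finset V) → Prop}
    {x : ℝ} (Z₀ : Finset (Finset V)) (P₀ : ℕ → ℝ) (hZ₀ : feas Z₀) (hP₀ : ∀ k, 0 ≤ P₀ k)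
    (hx : zoneObj D r t Wd σ Z₀ P₀ = x)
    (hle : ∀ Z P, feas Z → (∀ k, 0 ≤ P k) → x ≤ zoneObj D r t Wd σ Z P) :
    zStar D r t Wd σ feas = x :=
  IsLeast.csInf_eq ⟨⟨Z₀, P₀, hZ₀, hP₀, hx.symm⟩, by
    rintro _ ⟨Z, P, hZ, hP, rfl⟩
    exact hle Z P hZ hP⟩

section sigmaM

variable {V : Type*} (Z : Finset (Finset V))

@[simp]
lemma sigmaM_singleton (v : V) : sigmaM Z [v] = 1 := by
  simp [sigmaM]

@[simp]
lemma sigmaM_cons_cons (u v : V) (W : List V) :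
    sigmaM Z (u :: v :: W) = sigmaM Z (v :: W) + if SameZone Z u v then 0 else 1 := by
  by_cases h : SameZone Z u v <;> simp [sigmaM, h]
  omega

end sigmaM

namespace IsZonePartition

variable {V : Type*} [Fintype V] {Z : Finset (Finset V)}

lemma sum_card (hZ : IsZonePartition Z) : ∑ A ∈ Z, A.card = Fintype.card V := by
  obtain ⟨-, hdisj, hcover⟩ := hZ
  rw [← Finset.card_biUnion (t := fun A => A) hdisj, ← Finset.card_univ]
  congr 1
  ext v
  simpa using hcover v

lemma card_eq_one_of_card_eq (hZ : IsZonePartition Z) (hcard : Z.card = Fintype.card V) :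
    ∀ A ∈ Z, A.card = 1 := by
  have hsum : ∑ _A ∈ Z, 1 = ∑ A ∈ Z, A.card := by simp [hZ.sum_card, hcard]
  exact fun A hA =>
    ((Finset.sum_eq_sum_iff_of_le fun A hA => (hZ.1 A hA).card_pos).1 hsum A hA).symm

lemma sameZone_iff_eq_of_card_eq (hZ : IsZonePartition Z) (hcard : Z.card = Fintype.card V)
    (v w : V) : SameZone Z v w ↔ v = w := by
  constructor
  · rintro ⟨A, hA, hv, hw⟩
    exact Finset.card_le_one.1 (hZ.card_eq_one_of_card_eq hcard A hA).le v hv w hw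
  · rintro rfl
    obtain ⟨A, hA, hv⟩ := hZ.2.2 v
    exact ⟨A, hA, hv, hv⟩

end IsZonePartition

lemma zoneObj_path3 (Z : Finset (Finset (Fin 3))) (P : ℕ → ℝ) :
    zoneObj (Finset.univ : Finset (Fin 3)) (![1, 2, 2] : Fin 3 → ℝ) (fun _ => 1)
        ![([0, 1] : List (Fin 3)), [0, 1, 2], [1, 2]] sigmaM Z P =
      |1 - P (sigmaM Z [0, 1])| + |2 - P (sigmaM Z [0, 1, 2])| + |2 - P (sigmaM Z [1, 2])| := by
  simp [zoneObj, Fin.sum_univ_three]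

lemma one_le_zoneObj_path3_of_card_eq_three (Z : Finset (Finset (Fin 3))) (P : ℕ → ℝ)
    (hZ : IsZonePartition Z) (hcard : Z.card = 3) :
    1 ≤ zoneObj (Finset.univ : Finset (Fin 3)) (![1, 2, 2] : Fin 3 → ℝ) (fun _ => 1)
      ![([0, 1] : List (Fin 3)), [0, 1, 2], [1, 2]] sigmaM Z P := by
  have hsame := hZ.sameZone_iff_eq_of_card_eq (by simpa using hcard)
  have hsplit : (1 : ℝ) ≤ |1 - P 2| + |2 - P 2| :=
    calc (1 : ℝ) = |1 - 2| := by norm_num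
      _ ≤ |1 - P 2| + |P 2 - 2| := abs_sub_le _ _ _
      _ = |1 - P 2| + |2 - P 2| := by rw [abs_sub_comm (P 2)]
  rw [zoneObj_path3]
  simp only [sigmaM_cons_cons, sigmaM_singleton, hsame, Fin.reduceEq, if_false]
  linarith [abs_nonneg (2 - P 3)]

lemma isZonePartition_path3_two : IsZonePartition ({{0, 1}, {2}} : Finset (Finset (Fin 3))) := by
  unfold IsZonePartition
  decide

lemma isZonePartition_path3_three :
    IsZonePartition ({{0}, {1}, {2}} : Finset (Finset (Fin 3))) := by
  unfold IsZonePartition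
  decide

lemma zoneObj_path3_two :
    zoneObj (Finset.univ : Finset (Fin 3)) (![1, 2, 2] : Fin 3 → ℝ) (fun _ => 1)
      ![([0, 1] : List (Fin 3)), [0, 1, 2], [1, 2]] sigmaM
      ({{0, 1}, {2}} : Finset (Finset (Fin 3))) (fun k => if k = 1 then 1 else 2) = 0 := by
  have h01 : SameZone ({{0, 1}, {2}} : Finset (Finset (Fin 3))) 0 1 := by
    unfold SameZone; decide
  have h12 : ¬ SameZone ({{0, 1}, {2}} : Finset (Finset (Fin 3))) 1 2 := by
    unfold SameZone; decide
  rw [zoneObj_path3]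
  simp [h01, h12]

lemma zoneObj_path3_three :
    zoneObj (Finset.univ : Finset (Fin 3)) (![1, 2, 2] : Fin 3 → ℝ) (fun _ => 1)
      ![([0, 1] : List (Fin 3)), [0, 1, 2], [1, 2]] sigmaM
      ({{0}, {1}, {2}} : Finset (Finset (Fin 3))) (fun _ => 2) = 1 := by
  norm_num [zoneObj_path3]

/-- Requiring exactly N nonempty zones can worsen the optimum as N increases: on the path
graph with three vertices, with OD pairs (v_0,v_1), (v_0,v_2), (v_1,v_2), one passenger
each, reference prices 1, 2, 2 and the unique simple paths (multiple counting), the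
minimum objective over partitions into exactly 2 zones is 0 while the minimum over
partitions into exactly 3 zones is 1; concretely, the partition {{v_0,v_1},{v_2}} with a
suitable price function achieves objective 0, every partition into 3 nonempty zones has
objective at least 1 for every nonnegative price function, and objective exactly 1 is
achievable with 3 zones. -/
theorem example_exactly_N_zones :
    zStar (Finset.univ : Finset (Fin 3)) (![1, 2, 2] : Fin 3 → ℝ) (fun _ => 1)
        ![([0, 1] : List (Fin 3)), [0, 1, 2], [1, 2]] sigmaM
        (fun Z => IsZonePartition Z ∧ Z.card = 2) = 0 ∧
      zStar (Finset.univ : Finset (Fin 3)) (![1, 2, 2] : Fin 3 → ℝ) (fun _ => 1)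
        ![([0, 1] : List (Fin 3)), [0, 1, 2], [1, 2]] sigmaM
        (fun Z => IsZonePartition Z ∧ Z.card = 3) = 1 ∧
      (∃ P : ℕ → ℝ, (∀ k, 0 ≤ P k) ∧
        zoneObj (Finset.univ : Finset (Fin 3)) (![1, 2, 2] : Fin 3 → ℝ) (fun _ => 1)
          ![([0, 1] : List (Fin 3)), [0, 1, 2], [1, 2]] sigmaM
          ({({0, 1} : Finset (Fin 3)), ({2} : Finset (Fin 3))} : Finset (Finset (Fin 3)))
          P = 0) ∧
      (∀ (Z : Finset (Finset (Fin 3))) (P : ℕ → ℝ), IsZonePartition Z → Z.card = 3 →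
        (∀ k, 0 ≤ P k) →
        1 ≤ zoneObj (Finset.univ : Finset (Fin 3)) (![1, 2, 2] : Fin 3 → ℝ) (fun _ => 1)
          ![([0, 1] : List (Fin 3)), [0, 1, 2], [1, 2]] sigmaM Z P) ∧
      ∃ (Z : Finset (Finset (Fin 3))) (P : ℕ → ℝ), IsZonePartition Z ∧ Z.card = 3 ∧
        (∀ k, 0 ≤ P k) ∧
        zoneObj (Finset.univ : Finset (Fin 3)) (![1, 2, 2] : Fin 3 → ℝ) (fun _ => 1)
          ![([0, 1] : List (Fin 3)), [0, 1, 2], [1, 2]] sigmaM Z P = 1 := by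
  have hP₂ : ∀ k, (0 : ℝ) ≤ if k = 1 then 1 else 2 := fun k => by split_ifs <;> norm_num
  have hP₃ : ∀ _k : ℕ, (0 : ℝ) ≤ 2 := fun _ => zero_le_two
  refine ⟨?_, ?_, ⟨_, hP₂, zoneObj_path3_two⟩,
    fun Z P hZ hcard _ => one_le_zoneObj_path3_of_card_eq_three Z P hZ hcard,
    ⟨_, _, isZonePartition_path3_three, by decide, hP₃, zoneObj_path3_three⟩⟩
  · exact zStar_eq_of_attained _ _ ⟨isZonePartition_path3_two, by decide⟩ hP₂
      zoneObj_path3_two fun Z P _ _ => zoneObj_nonneg _ _ _ _ _ Z P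
  · exact zStar_eq_of_attained _ _ ⟨isZonePartition_path3_three, by decide⟩ hP₃
      zoneObj_path3_three fun Z P ⟨hZ, hcard⟩ _ =>
        one_le_zoneObj_path3_of_card_eq_three Z P hZ hcard
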